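/- arXiv:1505.02729 — 2 statements merged into one kernel-verified Lean document; each statement's English description precedes it below -/
import Mathlib

section
/- Let Δ_n = {v_0,...,v_n} be the vertices of a regular n-simplex inscribed in the unit sphere of R^n (unit norms, pairwise squared distances 2(n+1)/n, zero sum). For any nonempty bipartition with centroids a⁽¹⁾ and a⁽²⁾, the difference a⁽¹⁾ − a⁽²⁾ is orthogonal to a⁽ⁱ⁾ − v_j for each i ∈ {1,2} and each vertex v_j in the corresponding part: (a⁽¹⁾ − a⁽²⁾) · (a⁽ⁱ⁾ − v_j) = 0. -/
/-!
Equal norms and equal pairwise distances mean that all `⟪v i, v j⟫` with `i ≠ j` take one value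
`β` and all `‖v i‖ ^ 2` one value `γ`. Then for a part `T ∋ j` with centroid `a_T`, the vector
`a_T - v j` is orthogonal to every `v i` with `i ∉ T` (both `⟪v i, a_T⟫` and `⟪v i, v j⟫` equal
`β`), hence to the centroid of the other part, and it is orthogonal to `a_T` because `⟪v i, a_T⟫`
takes the same value for all `i ∈ T`.
-/

open Finset RealInnerProductSpace

section

variable {E ι : Type*} [NormedAddCommGroup E] [InnerProductSpace ℝ E] {v : ι → E} {γ β : ℝ}
  {T U : Finset ι} {i j : ι}

theorem real_inner_eq_of_norm_sq_of_norm_sub_sq {x y : E} {d : ℝ} (hx : ‖x‖ ^ 2 = γ)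
    (hy : ‖y‖ ^ 2 = γ) (hxy : ‖x - y‖ ^ 2 = d) : ⟪x, y⟫ = γ - d / 2 := by
  rw [norm_sub_sq_real, hx, hy] at hxy
  linarith

theorem inner_sum_eq_of_mem (hnorm : ∀ i, ‖v i‖ ^ 2 = γ)
    (hinner : ∀ i j, i ≠ j → ⟪v i, v j⟫ = β) (hi : i ∈ T) :
    ⟪v i, ∑ l ∈ T, v l⟫ = γ + (#T - 1) * β := by
  classical
  rw [inner_sum, ← add_sum_erase T _ hi, real_inner_self_eq_norm_sq, hnorm,
    sum_congr rfl fun l hl => hinner i l (ne_of_mem_erase hl).symm, sum_const, card_erase_of_mem hi,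
    nsmul_eq_mul, Nat.cast_pred (card_pos.mpr ⟨i, hi⟩)]

theorem inner_sum_eq_of_notMem (hinner : ∀ i j, i ≠ j → ⟪v i, v j⟫ = β) (hi : i ∉ T) :
    ⟪v i, ∑ l ∈ T, v l⟫ = #T * β := by
  rw [inner_sum, sum_congr rfl fun l hl => hinner i l (ne_of_mem_of_not_mem hl hi).symm, sum_const,
    nsmul_eq_mul]

theorem inner_centroid_sub_eq_zero_of_notMem (hinner : ∀ i j, i ≠ j → ⟪v i, v j⟫ = β)
    (hi : i ∉ T) (hj : j ∈ T) : ⟪v i, (#T : ℝ)⁻¹ • ∑ l ∈ T, v l - v j⟫ = 0 := by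
  have hT : (#T : ℝ) ≠ 0 := Nat.cast_ne_zero.mpr (card_ne_zero_of_mem hj)
  rw [inner_sub_right, real_inner_smul_right, inner_sum_eq_of_notMem hinner hi,
    hinner i j (ne_of_mem_of_not_mem hj hi).symm, inv_mul_cancel_left₀ hT, sub_self]

theorem inner_centroid_centroid_sub_eq_zero (hnorm : ∀ i, ‖v i‖ ^ 2 = γ)
    (hinner : ∀ i j, i ≠ j → ⟪v i, v j⟫ = β) (hj : j ∈ T) :
    ⟪(#T : ℝ)⁻¹ • ∑ l ∈ T, v l, (#T : ℝ)⁻¹ • ∑ l ∈ T, v l - v j⟫ = 0 := by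
  set a := (#T : ℝ)⁻¹ • ∑ l ∈ T, v l
  have hT : (#T : ℝ) ≠ 0 := Nat.cast_ne_zero.mpr (card_ne_zero_of_mem hj)
  have hconst : ∀ i ∈ T, ⟪v i, a⟫ = (#T : ℝ)⁻¹ * (γ + (#T - 1) * β) := fun i hi => by
    rw [real_inner_smul_right, inner_sum_eq_of_mem hnorm hinner hi]
  have haa : ⟪a, a⟫ = (#T : ℝ)⁻¹ * (γ + (#T - 1) * β) := by
    rw [real_inner_smul_left, sum_inner, sum_congr rfl hconst, sum_const, nsmul_eq_mul,
      inv_mul_cancel_left₀ hT]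
  rw [inner_sub_right, haa, real_inner_comm, hconst j hj, sub_self]

theorem inner_centroid_sub_centroid_centroid_sub_eq_zero (hnorm : ∀ i, ‖v i‖ ^ 2 = γ)
    (hinner : ∀ i j, i ≠ j → ⟪v i, v j⟫ = β) (hTU : Disjoint T U) (hj : j ∈ T) :
    ⟪(#T : ℝ)⁻¹ • ∑ l ∈ T, v l - (#U : ℝ)⁻¹ • ∑ l ∈ U, v l,
      (#T : ℝ)⁻¹ • ∑ l ∈ T, v l - v j⟫ = 0 := by
  have hU : ⟪(#U : ℝ)⁻¹ • ∑ l ∈ U, v l, (#T : ℝ)⁻¹ • ∑ l ∈ T, v l - v j⟫ = 0 := by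
    rw [real_inner_smul_left, sum_inner, sum_eq_zero fun i hi =>
      inner_centroid_sub_eq_zero_of_notMem hinner (disjoint_right.mp hTU hi) hj, mul_zero]
  rw [inner_sub_left, inner_centroid_centroid_sub_eq_zero hnorm hinner hj, hU, sub_self]

end

theorem simplex_bipartition_orthogonality_general (n : ℕ)
    (v : Fin (n + 1) → EuclideanSpace ℝ (Fin n))
    (hnorm : ∀ i, ‖v i‖ ^ 2 = 1)
    (hdist : ∀ i j, i ≠ j → ‖v i - v j‖ ^ 2 = 2 * (n + 1) / n)
    (S : Finset (Fin (n + 1)))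
    (a₁ a₂ : EuclideanSpace ℝ (Fin n))
    (ha₁ : a₁ = (S.card : ℝ)⁻¹ • ∑ i ∈ S, v i)
    (ha₂ : a₂ = (Sᶜ.card : ℝ)⁻¹ • ∑ i ∈ Sᶜ, v i) :
    (∀ j ∈ S, inner ℝ (a₁ - a₂) (a₁ - v j) = (0 : ℝ)) ∧
    (∀ j ∈ Sᶜ, inner ℝ (a₁ - a₂) (a₂ - v j) = (0 : ℝ)) := by
  have hinner : ∀ i j, i ≠ j → ⟪v i, v j⟫ = 1 - 2 * (n + 1) / n / 2 := fun i j hij =>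
    real_inner_eq_of_norm_sq_of_norm_sub_sq (hnorm i) (hnorm j) (hdist i j hij)
  subst ha₁ ha₂
  refine ⟨fun j hj => ?_, fun j hj => ?_⟩
  · exact inner_centroid_sub_centroid_centroid_sub_eq_zero hnorm hinner disjoint_compl_right hj
  · rw [← neg_sub, inner_neg_left,
      inner_centroid_sub_centroid_centroid_sub_eq_zero hnorm hinner disjoint_compl_left hj, neg_zero]

theorem simplex_bipartition_orthogonality (n : ℕ) (hn : 1 ≤ n)
    (v : Fin (n + 1) → EuclideanSpace ℝ (Fin n))
    (hnorm : ∀ i, ‖v i‖ ^ 2 = 1)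
    (hdist : ∀ i j, i ≠ j → ‖v i - v j‖ ^ 2 = 2 * (n + 1) / n)
    (hsum : ∑ i, v i = 0)
    (S : Finset (Fin (n + 1))) (hS : S.Nonempty) (hSc : Sᶜ.Nonempty)
    (a₁ a₂ : EuclideanSpace ℝ (Fin n))
    (ha₁ : a₁ = (S.card : ℝ)⁻¹ • ∑ i ∈ S, v i)
    (ha₂ : a₂ = (Sᶜ.card : ℝ)⁻¹ • ∑ i ∈ Sᶜ, v i) :
    (∀ j ∈ S, inner ℝ (a₁ - a₂) (a₁ - v j) = (0 : ℝ)) ∧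
    (∀ j ∈ Sᶜ, inner ℝ (a₁ - a₂) (a₂ - v j) = (0 : ℝ)) :=
  simplex_bipartition_orthogonality_general n v hnorm hdist S a₁ a₂ ha₁ ha₂
end

section
/- Suppose α is a random variable uniformly distributed on {1/2 − ε/2, 1/2 + ε/2} for 0 < ε < 1, and conditional on α, ξ_1,...,ξ_m are i.i.d. Bernoulli(α) random variables. Then for any function f : {0,1}^m → {1/2 − ε/2, 1/2 + ε/2}, the probability of misidentifying the bias satisfies P[f(ξ_1,...,ξ_m) ≠ α] > (1/4)(1 − √(1 − exp(−2⌈m/2⌉ε²/(1 − ε²)))). -/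
/-!
Let `P₊, P₋` be the laws of the sample under the two biases. Whatever `f` is, at each sample it
is wrong for one of the two hypotheses, so the error is at least `½ ∑ min (P₊, P₋)`. By
Cauchy–Schwarz, `(∑ √(P₊ P₋))² ≤ ∑ min (P₊, P₋) · ∑ max (P₊, P₋) ≤ 2 ∑ min (P₊, P₋)`, and the
Bhattacharyya coefficient `∑ √(P₊ P₋)` of a product measure is the product of the one-coin
coefficients, `√(1 - ε²)` each. Hence the error is at least `¼ (1 - ε²)ᵐ`, and the stated
bound is weaker: `(1 - ε²)ᵐ ≥ exp (-2⌈m/2⌉ ε² / (1 - ε²))` as `log (1 - x) ≥ -x / (1 - x)`, and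
`1 - √(1 - t) < t` for `0 < t < 1`.
-/

/-- Bias of the coin: `true` corresponds to `α₊ = 1/2 + ε/2`, `false` to
`α₋ = 1/2 - ε/2`. -/
noncomputable def coinBias (ε : ℝ) (a : Bool) : ℝ :=
  if a then 1 / 2 + ε / 2 else 1 / 2 - ε / 2

open Finset

noncomputable def bernoulliWeight (θ : ℝ) (b : Bool) : ℝ :=
  if b then θ else 1 - θ

lemma bernoulliWeight_nonneg {θ : ℝ} (h0 : 0 ≤ θ) (h1 : θ ≤ 1) (b : Bool) :
    0 ≤ bernoulliWeight θ b := by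
  cases b <;> simp [bernoulliWeight] <;> linarith

lemma sum_bernoulliWeight (θ : ℝ) : ∑ b, bernoulliWeight θ b = 1 := by
  simp [bernoulliWeight]

lemma sum_pi_prod_eq_one {α : Type*} [Fintype α] (w : α → ℝ) (hw : ∑ a, w a = 1) (n : ℕ) :
    ∑ ξ : Fin n → α, ∏ i, w (ξ i) = 1 := by
  rw [← Fintype.sum_pow, hw, one_pow]

lemma sum_sqrt_prod_mul_prod {α : Type*} [Fintype α] (u v : α → ℝ) (hu : 0 ≤ u) (hv : 0 ≤ v)
    (n : ℕ) :
    ∑ ξ : Fin n → α, √((∏ i, u (ξ i)) * ∏ i, v (ξ i)) = (∑ a, √(u a * v a)) ^ n := by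
  rw [Fintype.sum_pow]
  refine sum_congr rfl fun ξ _ => ?_
  rw [← prod_mul_distrib, Real.sqrt_prod _ fun i _ => mul_nonneg (hu _) (hv _)]

section BayesError

variable {X : Type*} [Fintype X]

lemma sq_sum_sqrt_mul_le_sum_min_mul_sum_max (p q : X → ℝ) (hp : 0 ≤ p) (hq : 0 ≤ q) :
    (∑ x, √(p x * q x)) ^ 2 ≤ (∑ x, min (p x) (q x)) * ∑ x, max (p x) (q x) := by
  have hmin : ∀ x, 0 ≤ min (p x) (q x) := fun x => le_min (hp x) (hq x)
  have hmax : ∀ x, 0 ≤ max (p x) (q x) := fun x => (hmin x).trans min_le_max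
  have h := sum_mul_sq_le_sq_mul_sq univ (fun x => √(min (p x) (q x)))
    fun x => √(max (p x) (q x))
  simpa only [← Real.sqrt_mul (hmin _), min_mul_max, Real.sq_sqrt (hmin _),
    Real.sq_sqrt (hmax _)] using h

lemma sq_sum_sqrt_mul_le_two_mul_sum_min (p q : X → ℝ) (hp : 0 ≤ p) (hq : 0 ≤ q)
    (hp1 : ∑ x, p x = 1) (hq1 : ∑ x, q x = 1) :
    (∑ x, √(p x * q x)) ^ 2 ≤ 2 * ∑ x, min (p x) (q x) := by
  have hmax : ∑ x, max (p x) (q x) ≤ 2 := by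
    calc ∑ x, max (p x) (q x) ≤ ∑ x, (p x + q x) :=
          sum_le_sum fun x _ => max_le_add_of_nonneg (hp x) (hq x)
      _ = 2 := by rw [sum_add_distrib, hp1, hq1]; norm_num
  have hmin : 0 ≤ ∑ x, min (p x) (q x) := sum_nonneg fun x _ => le_min (hp x) (hq x)
  nlinarith [sq_sum_sqrt_mul_le_sum_min_mul_sum_max p q hp hq]

lemma half_sum_min_le_bayes_error (p : Bool → X → ℝ) (f : X → Bool) :
    (1 / 2 : ℝ) * ∑ x, min (p true x) (p false x)
      ≤ ∑ a : Bool, ∑ x, (1 / 2 : ℝ) * p a x * (if f x ≠ a then 1 else 0) := by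
  rw [mul_sum, sum_comm]
  refine sum_le_sum fun x _ => ?_
  cases f x <;> simp

end BayesError

lemma coinBias_nonneg {ε : ℝ} (hε : |ε| ≤ 1) (a : Bool) : 0 ≤ coinBias ε a := by
  cases a <;> simp [coinBias] <;> linarith [abs_le.mp hε]

lemma coinBias_le_one {ε : ℝ} (hε : |ε| ≤ 1) (a : Bool) : coinBias ε a ≤ 1 := by
  cases a <;> simp [coinBias] <;> linarith [abs_le.mp hε]

lemma sum_sqrt_mul_bernoulliWeight_coinBias (ε : ℝ) :
    ∑ b, √(bernoulliWeight (coinBias ε true) b * bernoulliWeight (coinBias ε false) b)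
      = √(1 - ε ^ 2) := by
  have hb : ∀ b, bernoulliWeight (coinBias ε true) b * bernoulliWeight (coinBias ε false) b
      = (1 - ε ^ 2) / 4 := by
    intro b; cases b <;> simp [bernoulliWeight, coinBias] <;> ring
  have h4 : √(4 : ℝ) = 2 := by
    rw [show (4 : ℝ) = 2 ^ 2 by norm_num, Real.sqrt_sq zero_le_two]
  simp only [hb, Real.sqrt_div' _ zero_le_four, h4, sum_const, card_univ, Fintype.card_bool]
  ring

lemma quarter_mul_one_sub_sq_pow_le_coin_error (m : ℕ) {ε : ℝ} (hε : |ε| ≤ 1)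
    (f : (Fin m → Bool) → Bool) :
    (1 / 4 : ℝ) * (1 - ε ^ 2) ^ m
      ≤ ∑ a : Bool, ∑ ξ : Fin m → Bool,
          (1 / 2 : ℝ) * (∏ i, bernoulliWeight (coinBias ε a) (ξ i)) *
            (if f ξ ≠ a then 1 else 0) := by
  set P : Bool → (Fin m → Bool) → ℝ := fun a ξ => ∏ i, bernoulliWeight (coinBias ε a) (ξ i)
  have hw : ∀ a, 0 ≤ bernoulliWeight (coinBias ε a) :=
    fun a => bernoulliWeight_nonneg (coinBias_nonneg hε a) (coinBias_le_one hε a)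
  have hP : ∀ a, 0 ≤ P a := fun a ξ => prod_nonneg fun i _ => hw a (ξ i)
  have hP1 : ∀ a, ∑ ξ, P a ξ = 1 := fun a => sum_pi_prod_eq_one _ (sum_bernoulliWeight _) m
  have hcoeff : ∑ ξ, √(P true ξ * P false ξ) = √(1 - ε ^ 2) ^ m := by
    rw [sum_sqrt_prod_mul_prod _ _ (hw true) (hw false),
      sum_sqrt_mul_bernoulliWeight_coinBias]
  have hε2 : 0 ≤ 1 - ε ^ 2 := by nlinarith [sq_abs ε, abs_nonneg ε]
  have hCS := sq_sum_sqrt_mul_le_two_mul_sum_min _ _ (hP true) (hP false) (hP1 true) (hP1 false)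
  rw [hcoeff, ← pow_mul, mul_comm, pow_mul, Real.sq_sqrt hε2] at hCS
  calc (1 / 4 : ℝ) * (1 - ε ^ 2) ^ m ≤ (1 / 2) * ∑ ξ, min (P true ξ) (P false ξ) := by linarith
    _ ≤ _ := half_sum_min_le_bayes_error P f

lemma exp_neg_mul_div_one_sub_le_one_sub_pow {x : ℝ} (hx0 : 0 ≤ x) (hx1 : x < 1) {n : ℕ}
    {k : ℝ} (hnk : n ≤ k) :
    Real.exp (-k * x / (1 - x)) ≤ (1 - x) ^ n := by
  have hlog : -(x / (1 - x)) ≤ Real.log (1 - x) := by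
    have h := Real.one_sub_inv_le_log_of_pos (sub_pos.mpr hx1)
    have : 1 - (1 - x)⁻¹ = -(x / (1 - x)) := by field_simp [(sub_pos.mpr hx1).ne']; ring
    linarith
  have hnx : (n : ℝ) * (x / (1 - x)) ≤ k * (x / (1 - x)) :=
    mul_le_mul_of_nonneg_right hnk (div_nonneg hx0 (sub_pos.mpr hx1).le)
  calc Real.exp (-k * x / (1 - x)) ≤ Real.exp (n * Real.log (1 - x)) := by
        rw [Real.exp_le_exp, neg_mul, neg_div, mul_div_assoc]
        nlinarith [Nat.cast_nonneg (α := ℝ) n]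
    _ = (1 - x) ^ n := by rw [Real.exp_nat_mul, Real.exp_log (sub_pos.mpr hx1)]

lemma one_sub_sqrt_one_sub_lt {t : ℝ} (h0 : 0 < t) (h1 : t < 1) : 1 - √(1 - t) < t := by
  have : 1 - t < √(1 - t) := by
    rw [Real.lt_sqrt (by linarith)]
    nlinarith
  linarith

theorem single_coin_lower_bound (m : ℕ) (hm : 1 ≤ m) (ε : ℝ)
    (hε0 : 0 < ε) (hε1 : ε < 1) (f : (Fin m → Bool) → Bool) :
    (1 / 4 : ℝ) *
        (1 - Real.sqrt (1 - Real.exp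
          (-2 * (⌈(m : ℝ) / 2⌉ : ℝ) * ε ^ 2 / (1 - ε ^ 2))))
      < ∑ a : Bool, ∑ ξ : Fin m → Bool,
          (1 / 2 : ℝ) *
            (∏ i, (if ξ i then coinBias ε a else 1 - coinBias ε a)) *
            (if f ξ ≠ a then 1 else 0) := by
  have hε2 : ε ^ 2 < 1 := by nlinarith
  have hexp : Real.exp (-2 * (⌈(m : ℝ) / 2⌉ : ℝ) * ε ^ 2 / (1 - ε ^ 2)) ≤ (1 - ε ^ 2) ^ m := by
    have hk : (m : ℝ) ≤ 2 * ⌈(m : ℝ) / 2⌉ := by linarith [Int.le_ceil ((m : ℝ) / 2)]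
    simpa only [neg_mul, mul_assoc] using
      exp_neg_mul_div_one_sub_le_one_sub_pow (sq_nonneg ε) hε2 hk
  have hneg : -2 * (⌈(m : ℝ) / 2⌉ : ℝ) * ε ^ 2 / (1 - ε ^ 2) < 0 := by
    have : (0 : ℝ) < ⌈(m : ℝ) / 2⌉ := by exact_mod_cast Int.ceil_pos.mpr (by positivity)
    exact div_neg_of_neg_of_pos (by nlinarith [sq_pos_of_pos hε0]) (by linarith)
  calc _ < (1 / 4 : ℝ) * Real.exp (-2 * (⌈(m : ℝ) / 2⌉ : ℝ) * ε ^ 2 / (1 - ε ^ 2)) := by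
        gcongr
        exact one_sub_sqrt_one_sub_lt (Real.exp_pos _) (Real.exp_lt_one_iff.mpr hneg)
    _ ≤ (1 / 4 : ℝ) * (1 - ε ^ 2) ^ m := by gcongr
    _ ≤ _ := quarter_mul_one_sub_sq_pow_le_coin_error m (abs_le.mpr ⟨by linarith, hε1.le⟩) f
end
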